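/- Let U ⊆ ℝ_t × ℝ²_x be open, let h and v¹, v² be C² on U with h > 0, and suppose they solve the 2D rotating shallow water system B h = −h div v, B v¹ = v² − ∂₁h, B v² = −v¹ − ∂₂h on U. Set ρ = ln h, η = √h, ζ = (∂₁v² − ∂₂v¹) e^{−ρ}, ξ = ζ + e^{−ρ}, and let g be the acoustical metric built from (η, v¹, v²) with wave operator □_g. Then for i = 1, 2 the velocity components satisfy the covariant wave equation □_g v^i = −ε_{ia} e^{ρ} ∂_a ξ + 2ζ (ε_{ij} B v^j + v^i) − ½ g^{αβ} ∂_α v^i ∂_β ρ + e^{−ρ} v^i + e^{−ρ} ε_{ij} v^j Bρ on U (summation over repeated Latin indices a, j). -/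

import Mathlib

/-- Partial derivative in the `i`-th coordinate direction of spacetime
`ℝ³ ≃ (Fin 3 → ℝ)`, coordinates `(x⁰, x¹, x²) = (t, x₁, x₂)`. -/
noncomputable def pd (i : Fin 3) (f : (Fin 3 → ℝ) → ℝ) (x : Fin 3 → ℝ) : ℝ :=
  fderiv ℝ f x (Pi.single i 1)

/-- Material derivative `B = ∂ₜ + v¹∂₁ + v²∂₂`. -/
noncomputable def matD (v1 v2 f : (Fin 3 → ℝ) → ℝ) (x : Fin 3 → ℝ) : ℝ :=
  pd 0 f x + v1 x * pd 1 f x + v2 x * pd 2 f x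

/-- The acoustical metric field `g₀₀ = −η² + |v|²`, `g₀ᵢ = gᵢ₀ = −vⁱ`, `g_{ij} = δ_{ij}`. -/
noncomputable def gMat (η v1 v2 : (Fin 3 → ℝ) → ℝ) (x : Fin 3 → ℝ) :
    Matrix (Fin 3) (Fin 3) ℝ :=
  !![-(η x) ^ 2 + (v1 x) ^ 2 + (v2 x) ^ 2, -(v1 x), -(v2 x);
     -(v1 x), 1, 0;
     -(v2 x), 0, 1]

/-- Pointwise inverse `g^{αβ}` of the acoustical metric. -/
noncomputable def gInv (η v1 v2 : (Fin 3 → ℝ) → ℝ) (x : Fin 3 → ℝ) :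
    Matrix (Fin 3) (Fin 3) ℝ :=
  (gMat η v1 v2 x)⁻¹

/-- Christoffel symbols of the first kind
`Γ_{αβγ} = ½(∂_α g_{βγ} + ∂_β g_{αγ} − ∂_γ g_{αβ})` of the acoustical metric. -/
noncomputable def Γfst (η v1 v2 : (Fin 3 → ℝ) → ℝ) (α β γ : Fin 3) (x : Fin 3 → ℝ) : ℝ :=
  (pd α (fun y => gMat η v1 v2 y β γ) x + pd β (fun y => gMat η v1 v2 y α γ) x
    - pd γ (fun y => gMat η v1 v2 y α β) x) / 2

/-- Christoffel symbols of the second kind `Γ^γ_{αβ} = g^{γδ} Γ_{αβδ}`. -/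
noncomputable def Γsnd (η v1 v2 : (Fin 3 → ℝ) → ℝ) (γ α β : Fin 3) (x : Fin 3 → ℝ) : ℝ :=
  ∑ d : Fin 3, gInv η v1 v2 x γ d * Γfst η v1 v2 α β d x

/-- Wave operator `□_g f = g^{αβ} ∂_α ∂_β f − g^{αβ} Γ^γ_{αβ} ∂_γ f` of the acoustical
metric. -/
noncomputable def box (η v1 v2 f : (Fin 3 → ℝ) → ℝ) (x : Fin 3 → ℝ) : ℝ :=
  (∑ α : Fin 3, ∑ β : Fin 3, gInv η v1 v2 x α β * pd α (pd β f) x)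
    - ∑ α : Fin 3, ∑ β : Fin 3, ∑ γ : Fin 3,
        gInv η v1 v2 x α β * Γsnd η v1 v2 γ α β x * pd γ f x

/-!
The acoustical metric has inverse `g⁻¹ = -η⁻² B ⊗ B + δᵃᵇ ∂ₐ ⊗ ∂_b` and `√|det g| = η`, whence
`□_g f = -η⁻² B(Bf) + Δf - Γ⁰ Bf + ∂ₐ(η²) ∂ₐf / (2η²)` with `Γ⁰ = div v / η² - B(η²) / (2η⁴)`.
For `η = √h` and `f = vⁱ`, the momentum equation turns `B(Bvⁱ)` into `B(∂ᵢh)` plus lower order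
terms, and commuting `B` with `∂ᵢ` and using the mass equation gives `B(∂ᵢh) = -h ∂ᵢ div v + …`.
This `∂ᵢ div v` cancels the one in `Δvⁱ = ∂ᵢ div v - εᵢₐ ∂ₐω`, `ω = ∂₁v² - ∂₂v¹`, leaving the
derivative of the potential vorticity `ξ = (ω + 1) / h`; what remains are first-order terms
matching the right-hand side.
-/

open Filter Topology

section Calculus

variable {f g : (Fin 3 → ℝ) → ℝ} {x : Fin 3 → ℝ} {i : Fin 3}

theorem pd_congr (hfg : f =ᶠ[𝓝 x] g) : pd i f x = pd i g x := by
  rw [pd, pd, hfg.fderiv_eq]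

theorem pd_const (c : ℝ) : pd i (fun _ => c) x = 0 := by
  simp [pd]

theorem pd_add (hf : DifferentiableAt ℝ f x) (hg : DifferentiableAt ℝ g x) :
    pd i (fun y => f y + g y) x = pd i f x + pd i g x := by
  rw [pd, fderiv_fun_add hf hg]; rfl

theorem pd_sub (hf : DifferentiableAt ℝ f x) (hg : DifferentiableAt ℝ g x) :
    pd i (fun y => f y - g y) x = pd i f x - pd i g x := by
  rw [pd, fderiv_fun_sub hf hg]; rfl

theorem pd_neg : pd i (fun y => -f y) x = -pd i f x := by
  rw [pd, fderiv_fun_neg]; rfl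

theorem pd_mul (hf : DifferentiableAt ℝ f x) (hg : DifferentiableAt ℝ g x) :
    pd i (fun y => f y * g y) x = f x * pd i g x + g x * pd i f x := by
  rw [pd, fderiv_fun_mul hf hg]; rfl

theorem pd_sq (hf : DifferentiableAt ℝ f x) :
    pd i (fun y => f y ^ 2) x = 2 * f x * pd i f x := by
  simp only [sq]; rw [pd_mul hf hf]; ring

theorem pd_log (hf : DifferentiableAt ℝ f x) (hx : f x ≠ 0) :
    pd i (fun y => Real.log (f y)) x = pd i f x / f x := by
  simp [pd, (hf.hasFDerivAt.log hx).fderiv, div_eq_inv_mul]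

theorem pd_inv (hf : DifferentiableAt ℝ f x) (hx : f x ≠ 0) :
    pd i (fun y => (f y)⁻¹) x = -pd i f x / f x ^ 2 := by
  have hinv : HasFDerivAt (fun y => (f y)⁻¹) (-(f x ^ 2)⁻¹ • fderiv ℝ f x) x :=
    (hasDerivAt_inv hx).comp_hasFDerivAt x hf.hasFDerivAt
  simp [pd, hinv.fderiv, div_eq_inv_mul]

theorem ContDiffAt.differentiableAt_pd (hf : ContDiffAt ℝ 2 f x) (j : Fin 3) :
    DifferentiableAt ℝ (pd j f) x :=
  ((hf.fderiv_right (m := 1) le_rfl).differentiableAt one_ne_zero).clm_apply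
    (differentiableAt_const _)

theorem pd_pd_comm (hf : ContDiffAt ℝ 2 f x) (i j : Fin 3) :
    pd i (pd j f) x = pd j (pd i f) x := by
  have hd := (hf.fderiv_right (m := 1) le_rfl).differentiableAt one_ne_zero
  have key : ∀ a b : Fin 3,
      pd a (pd b f) x = fderiv ℝ (fderiv ℝ f) x (Pi.single a 1) (Pi.single b 1) := by
    intro a b
    change fderiv ℝ ((ContinuousLinearMap.apply ℝ ℝ (Pi.single b 1)) ∘ fderiv ℝ f) x _ = _
    rw [((ContinuousLinearMap.apply ℝ ℝ _).hasFDerivAt.comp x hd.hasFDerivAt).fderiv]; rfl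
  rw [key, key]
  exact hf.isSymmSndFDerivAt (by simp) _ _

end Calculus

section MaterialDerivative

variable {v1 v2 f g : (Fin 3 → ℝ) → ℝ} {x : Fin 3 → ℝ}

theorem matD_congr (hfg : f =ᶠ[𝓝 x] g) : matD v1 v2 f x = matD v1 v2 g x := by
  simp only [matD, pd_congr hfg]

theorem matD_neg : matD v1 v2 (fun y => -f y) x = -matD v1 v2 f x := by
  simp only [matD, pd_neg]
  ring

theorem matD_sub (hf : DifferentiableAt ℝ f x) (hg : DifferentiableAt ℝ g x) :
    matD v1 v2 (fun y => f y - g y) x = matD v1 v2 f x - matD v1 v2 g x := by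
  simp only [matD, pd_sub hf hg]
  ring

theorem pd_matD (hv1 : DifferentiableAt ℝ v1 x) (hv2 : DifferentiableAt ℝ v2 x)
    (hf : ContDiffAt ℝ 2 f x) (i : Fin 3) :
    pd i (matD v1 v2 f) x = pd i (pd 0 f) x + v1 x * pd i (pd 1 f) x + v2 x * pd i (pd 2 f) x
      + pd i v1 x * pd 1 f x + pd i v2 x * pd 2 f x := by
  have hdf := hf.differentiableAt_pd
  change pd i (fun y => pd 0 f y + v1 y * pd 1 f y + v2 y * pd 2 f y) x = _
  rw [pd_add (by fun_prop) (by fun_prop), pd_add (by fun_prop) (by fun_prop),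
    pd_mul hv1 (hdf 1), pd_mul hv2 (hdf 2)]
  ring

theorem matD_pd (hv1 : DifferentiableAt ℝ v1 x) (hv2 : DifferentiableAt ℝ v2 x)
    (hf : ContDiffAt ℝ 2 f x) (i : Fin 3) :
    matD v1 v2 (pd i f) x
      = pd i (matD v1 v2 f) x - pd i v1 x * pd 1 f x - pd i v2 x * pd 2 f x := by
  rw [pd_matD hv1 hv2 hf, matD, pd_pd_comm hf 0, pd_pd_comm hf 1, pd_pd_comm hf 2]
  ring

end MaterialDerivative

section AcousticalMetric

variable {η v1 v2 f : (Fin 3 → ℝ) → ℝ} {x : Fin 3 → ℝ}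

theorem gInv_eq (hη : η x ≠ 0) :
    gInv η v1 v2 x = (η x ^ 2)⁻¹ •
      !![-1, -v1 x, -v2 x;
         -v1 x, η x ^ 2 - v1 x ^ 2, -(v1 x * v2 x);
         -v2 x, -(v1 x * v2 x), η x ^ 2 - v2 x ^ 2] := by
  apply Matrix.inv_eq_right_inv
  ext i j
  fin_cases i <;> fin_cases j <;>
    simp [gMat, Matrix.mul_apply, Fin.sum_univ_three] <;> field_simp <;> ring

theorem sum_gInv_mul_mul (hη : η x ≠ 0) (a b : Fin 3 → ℝ) :
    ∑ α : Fin 3, ∑ β : Fin 3, gInv η v1 v2 x α β * a α * b β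
      = -(a 0 + v1 x * a 1 + v2 x * a 2) * (b 0 + v1 x * b 1 + v2 x * b 2) / η x ^ 2
        + (a 1 * b 1 + a 2 * b 2) := by
  simp [gInv_eq hη, Fin.sum_univ_three]
  field_simp
  ring

theorem pd_gMat (hη : DifferentiableAt ℝ (fun y => η y ^ 2) x)
    (hv1 : DifferentiableAt ℝ v1 x) (hv2 : DifferentiableAt ℝ v2 x) (a β γ : Fin 3) :
    pd a (fun y => gMat η v1 v2 y β γ) x =
      !![-pd a (fun y => η y ^ 2) x + 2 * v1 x * pd a v1 x + 2 * v2 x * pd a v2 x,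
          -pd a v1 x, -pd a v2 x;
         -pd a v1 x, 0, 0;
         -pd a v2 x, 0, 0] β γ := by
  fin_cases β <;> fin_cases γ <;> simp [gMat, pd_neg, pd_const]
  rw [pd_add (by fun_prop) (by fun_prop), pd_add (by fun_prop) (by fun_prop), pd_neg,
    pd_sq hv1, pd_sq hv2]

end AcousticalMetric

section WaveOperator

variable {η v1 v2 f : (Fin 3 → ℝ) → ℝ} {x : Fin 3 → ℝ}

theorem sum_gInv_mul_pd_pd (hη : η x ≠ 0) (hv1 : DifferentiableAt ℝ v1 x)
    (hv2 : DifferentiableAt ℝ v2 x) (hf : ContDiffAt ℝ 2 f x) :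
    ∑ α : Fin 3, ∑ β : Fin 3, gInv η v1 v2 x α β * pd α (pd β f) x
      = -(matD v1 v2 (matD v1 v2 f) x - matD v1 v2 v1 x * pd 1 f x
          - matD v1 v2 v2 x * pd 2 f x) / η x ^ 2
        + (pd 1 (pd 1 f) x + pd 2 (pd 2 f) x) := by
  simp [gInv_eq hη, Fin.sum_univ_three, matD, pd_matD hv1 hv2 hf]
  rw [pd_pd_comm hf 1 0, pd_pd_comm hf 2 0, pd_pd_comm hf 2 1]
  field_simp
  ring

theorem sum_gInv_mul_Γsnd_mul_pd (hη : η x ≠ 0)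
    (hη2 : DifferentiableAt ℝ (fun y => η y ^ 2) x)
    (hv1 : DifferentiableAt ℝ v1 x) (hv2 : DifferentiableAt ℝ v2 x) :
    ∑ α : Fin 3, ∑ β : Fin 3, ∑ γ : Fin 3, gInv η v1 v2 x α β * Γsnd η v1 v2 γ α β x * pd γ f x
      = ((pd 1 v1 x + pd 2 v2 x) / η x ^ 2
          - matD v1 v2 (fun y => η y ^ 2) x / (2 * η x ^ 4)) * matD v1 v2 f x
        + ((matD v1 v2 v1 x - pd 1 (fun y => η y ^ 2) x / 2) * pd 1 f x
          + (matD v1 v2 v2 x - pd 2 (fun y => η y ^ 2) x / 2) * pd 2 f x) / η x ^ 2 := by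
  simp [Γsnd, Γfst, pd_gMat hη2 hv1 hv2, gInv_eq hη, Fin.sum_univ_three, matD]
  field_simp
  ring

theorem box_eq (hη : η x ≠ 0) (hη2 : DifferentiableAt ℝ (fun y => η y ^ 2) x)
    (hv1 : DifferentiableAt ℝ v1 x) (hv2 : DifferentiableAt ℝ v2 x) (hf : ContDiffAt ℝ 2 f x) :
    box η v1 v2 f x
      = -matD v1 v2 (matD v1 v2 f) x / η x ^ 2 + (pd 1 (pd 1 f) x + pd 2 (pd 2 f) x)
        - ((pd 1 v1 x + pd 2 v2 x) / η x ^ 2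
          - matD v1 v2 (fun y => η y ^ 2) x / (2 * η x ^ 4)) * matD v1 v2 f x
        + (pd 1 (fun y => η y ^ 2) x * pd 1 f x + pd 2 (fun y => η y ^ 2) x * pd 2 f x)
          / (2 * η x ^ 2) := by
  rw [box, sum_gInv_mul_pd_pd hη hv1 hv2 hf, sum_gInv_mul_Γsnd_mul_pd hη hη2 hv1 hv2]
  field_simp
  ring

end WaveOperator

structure IsShallowWaterSolutionNear (h v1 v2 : (Fin 3 → ℝ) → ℝ) (x : Fin 3 → ℝ) : Prop where
  contDiffAt_h : ContDiffAt ℝ 2 h x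
  contDiffAt_v1 : ContDiffAt ℝ 2 v1 x
  contDiffAt_v2 : ContDiffAt ℝ 2 v2 x
  eventually_pos : ∀ᶠ y in 𝓝 x, 0 < h y
  mass : ∀ᶠ y in 𝓝 x, matD v1 v2 h y = -h y * (pd 1 v1 y + pd 2 v2 y)
  momentum1 : ∀ᶠ y in 𝓝 x, matD v1 v2 v1 y = v2 y - pd 1 h y
  momentum2 : ∀ᶠ y in 𝓝 x, matD v1 v2 v2 y = -v1 y - pd 2 h y

namespace IsShallowWaterSolutionNear

variable {h v1 v2 f : (Fin 3 → ℝ) → ℝ} {x : Fin 3 → ℝ}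

theorem of_isOpen {U : Set (Fin 3 → ℝ)} (hU : IsOpen U) (hh : ContDiffOn ℝ 2 h U)
    (hv1 : ContDiffOn ℝ 2 v1 U) (hv2 : ContDiffOn ℝ 2 v2 U) (hpos : ∀ y ∈ U, 0 < h y)
    (hmass : ∀ y ∈ U, matD v1 v2 h y = -h y * (pd 1 v1 y + pd 2 v2 y))
    (hmom1 : ∀ y ∈ U, matD v1 v2 v1 y = v2 y - pd 1 h y)
    (hmom2 : ∀ y ∈ U, matD v1 v2 v2 y = -v1 y - pd 2 h y) (hx : x ∈ U) :
    IsShallowWaterSolutionNear h v1 v2 x :=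
  have hU : U ∈ 𝓝 x := hU.mem_nhds hx
  ⟨hh.contDiffAt hU, hv1.contDiffAt hU, hv2.contDiffAt hU, eventually_of_mem hU hpos,
    eventually_of_mem hU hmass, eventually_of_mem hU hmom1, eventually_of_mem hU hmom2⟩

theorem pos (hs : IsShallowWaterSolutionNear h v1 v2 x) : 0 < h x :=
  hs.eventually_pos.self_of_nhds

theorem differentiableAt_h (hs : IsShallowWaterSolutionNear h v1 v2 x) :
    DifferentiableAt ℝ h x :=
  hs.contDiffAt_h.differentiableAt two_ne_zero

theorem differentiableAt_v1 (hs : IsShallowWaterSolutionNear h v1 v2 x) :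
    DifferentiableAt ℝ v1 x :=
  hs.contDiffAt_v1.differentiableAt two_ne_zero

theorem differentiableAt_v2 (hs : IsShallowWaterSolutionNear h v1 v2 x) :
    DifferentiableAt ℝ v2 x :=
  hs.contDiffAt_v2.differentiableAt two_ne_zero

theorem box_sqrt_eq (hs : IsShallowWaterSolutionNear h v1 v2 x) (hf : ContDiffAt ℝ 2 f x) :
    box (fun y => √(h y)) v1 v2 f x
      = -matD v1 v2 (matD v1 v2 f) x / h x + (pd 1 (pd 1 f) x + pd 2 (pd 2 f) x)
        - 3 * (pd 1 v1 x + pd 2 v2 x) / (2 * h x) * matD v1 v2 f x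
        + (pd 1 h x * pd 1 f x + pd 2 h x * pd 2 f x) / (2 * h x) := by
  have hsq : (fun y => √(h y) ^ 2) =ᶠ[𝓝 x] h := by
    filter_upwards [hs.eventually_pos] with y hy using Real.sq_sqrt hy.le
  have hne : √(h x) ≠ 0 := (Real.sqrt_pos.2 hs.pos).ne'
  have hsqx : √(h x) ^ 2 = h x := Real.sq_sqrt hs.pos.le
  have hsqx4 : √(h x) ^ 4 = h x ^ 2 := by rw [show 4 = 2 * 2 by rfl, pow_mul, hsqx]
  rw [box_eq hne (hs.differentiableAt_h.congr_of_eventuallyEq hsq) hs.differentiableAt_v1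
      hs.differentiableAt_v2 hf, pd_congr hsq, pd_congr hsq, matD_congr hsq,
    hs.mass.self_of_nhds, hsqx4, hsqx]
  field_simp
  ring

theorem pd_matD_h (hs : IsShallowWaterSolutionNear h v1 v2 x) (i : Fin 3) :
    pd i (matD v1 v2 h) x
      = -pd i h x * (pd 1 v1 x + pd 2 v2 x) - h x * (pd i (pd 1 v1) x + pd i (pd 2 v2) x) := by
  have hd1 := hs.contDiffAt_v1.differentiableAt_pd
  have hd2 := hs.contDiffAt_v2.differentiableAt_pd
  rw [pd_congr (f := matD v1 v2 h) hs.mass,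
    pd_mul (f := fun y => -h y) (g := fun y => pd 1 v1 y + pd 2 v2 y)
      hs.differentiableAt_h.neg ((hd1 1).add (hd2 2)),
    pd_neg, pd_add (hd1 1) (hd2 2)]
  ring

theorem matD_matD_v1 (hs : IsShallowWaterSolutionNear h v1 v2 x) :
    matD v1 v2 (matD v1 v2 v1) x
      = -v1 x - pd 2 h x + pd 1 h x * (pd 1 v1 x + pd 2 v2 x)
        + h x * (pd 1 (pd 1 v1) x + pd 1 (pd 2 v2) x)
        + pd 1 v1 x * pd 1 h x + pd 1 v2 x * pd 2 h x := by
  rw [matD_congr hs.momentum1,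
    matD_sub hs.differentiableAt_v2 (hs.contDiffAt_h.differentiableAt_pd 1),
    hs.momentum2.self_of_nhds,
    matD_pd hs.differentiableAt_v1 hs.differentiableAt_v2 hs.contDiffAt_h, hs.pd_matD_h]
  ring

theorem matD_matD_v2 (hs : IsShallowWaterSolutionNear h v1 v2 x) :
    matD v1 v2 (matD v1 v2 v2) x
      = -v2 x + pd 1 h x + pd 2 h x * (pd 1 v1 x + pd 2 v2 x)
        + h x * (pd 2 (pd 1 v1) x + pd 2 (pd 2 v2) x)
        + pd 2 v1 x * pd 1 h x + pd 2 v2 x * pd 2 h x := by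
  rw [matD_congr hs.momentum2,
    matD_sub (f := fun y => -v1 y) hs.differentiableAt_v1.neg
      (hs.contDiffAt_h.differentiableAt_pd 2), matD_neg,
    hs.momentum1.self_of_nhds,
    matD_pd hs.differentiableAt_v1 hs.differentiableAt_v2 hs.contDiffAt_h, hs.pd_matD_h]
  ring

theorem matD_log (hs : IsShallowWaterSolutionNear h v1 v2 x) :
    matD v1 v2 (fun y => Real.log (h y)) x = -(pd 1 v1 x + pd 2 v2 x) := by
  have hlog := fun i => pd_log (i := i) hs.differentiableAt_h hs.pos.ne'
  have hdiv : matD v1 v2 (fun y => Real.log (h y)) x = matD v1 v2 h x / h x := by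
    simp only [matD, hlog]
    ring
  rw [hdiv, hs.mass.self_of_nhds]
  field_simp [hs.pos.ne']

theorem sum_gInv_mul_pd_mul_pd_log (hs : IsShallowWaterSolutionNear h v1 v2 x) :
    ∑ α : Fin 3, ∑ β : Fin 3,
        gInv (fun y => √(h y)) v1 v2 x α β * pd α f x * pd β (fun y => Real.log (h y)) x
      = (matD v1 v2 f x * (pd 1 v1 x + pd 2 v2 x) + pd 1 f x * pd 1 h x + pd 2 f x * pd 2 h x)
        / h x := by
  have hne : √(h x) ≠ 0 := (Real.sqrt_pos.2 hs.pos).ne'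
  rw [sum_gInv_mul_mul hne (fun α => pd α f x), ← matD, ← matD, hs.matD_log,
    Real.sq_sqrt hs.pos.le, pd_log hs.differentiableAt_h hs.pos.ne',
    pd_log hs.differentiableAt_h hs.pos.ne']
  field_simp
  ring

theorem pd_potentialVorticity (hs : IsShallowWaterSolutionNear h v1 v2 x) (a : Fin 3) :
    pd a (fun y => (pd 1 v2 y - pd 2 v1 y) * Real.exp (-Real.log (h y))
        + Real.exp (-Real.log (h y))) x
      = (pd a (pd 1 v2) x - pd a (pd 2 v1) x) / h x
        - (pd 1 v2 x - pd 2 v1 x + 1) * pd a h x / h x ^ 2 := by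
  have hd1 := hs.contDiffAt_v1.differentiableAt_pd
  have hd2 := hs.contDiffAt_v2.differentiableAt_pd
  have hξ : (fun y => (pd 1 v2 y - pd 2 v1 y) * Real.exp (-Real.log (h y))
        + Real.exp (-Real.log (h y)))
      =ᶠ[𝓝 x] fun y => (pd 1 v2 y - pd 2 v1 y + 1) * (h y)⁻¹ := by
    filter_upwards [hs.eventually_pos] with y hy
    rw [Real.exp_neg, Real.exp_log hy]
    ring
  rw [pd_congr hξ,
    pd_mul (f := fun y => pd 1 v2 y - pd 2 v1 y + 1) (g := fun y => (h y)⁻¹)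
      (((hd2 1).sub (hd1 2)).add_const 1) (hs.differentiableAt_h.inv hs.pos.ne'),
    pd_add (f := fun y => pd 1 v2 y - pd 2 v1 y) ((hd2 1).sub (hd1 2))
      (differentiableAt_const 1), pd_const,
    pd_sub (hd2 1) (hd1 2), pd_inv hs.differentiableAt_h hs.pos.ne']
  field_simp
  ring

theorem box_v1 (hs : IsShallowWaterSolutionNear h v1 v2 x) :
    box (fun y => √(h y)) v1 v2 v1 x
      = -(Real.exp (Real.log (h x)))
          * pd 2 (fun y => (pd 1 v2 y - pd 2 v1 y) * Real.exp (-Real.log (h y))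
              + Real.exp (-Real.log (h y))) x
        + 2 * ((pd 1 v2 x - pd 2 v1 x) * Real.exp (-Real.log (h x)))
            * (matD v1 v2 v2 x + v1 x)
        - (1 / 2) * ∑ α : Fin 3, ∑ β : Fin 3,
            gInv (fun y => √(h y)) v1 v2 x α β
              * pd α v1 x * pd β (fun y => Real.log (h y)) x
        + Real.exp (-Real.log (h x)) * v1 x
        + Real.exp (-Real.log (h x)) * v2 x
            * matD v1 v2 (fun y => Real.log (h y)) x := by
  rw [hs.box_sqrt_eq hs.contDiffAt_v1, hs.matD_matD_v1, hs.pd_potentialVorticity,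
    hs.sum_gInv_mul_pd_mul_pd_log, hs.matD_log, hs.momentum1.self_of_nhds,
    hs.momentum2.self_of_nhds, Real.exp_neg, Real.exp_log hs.pos,
    pd_pd_comm hs.contDiffAt_v2 1 2]
  field_simp [hs.pos.ne']
  ring

theorem box_v2 (hs : IsShallowWaterSolutionNear h v1 v2 x) :
    box (fun y => √(h y)) v1 v2 v2 x
      = Real.exp (Real.log (h x))
          * pd 1 (fun y => (pd 1 v2 y - pd 2 v1 y) * Real.exp (-Real.log (h y))
              + Real.exp (-Real.log (h y))) x
        + 2 * ((pd 1 v2 x - pd 2 v1 x) * Real.exp (-Real.log (h x)))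
            * (-(matD v1 v2 v1 x) + v2 x)
        - (1 / 2) * ∑ α : Fin 3, ∑ β : Fin 3,
            gInv (fun y => √(h y)) v1 v2 x α β
              * pd α v2 x * pd β (fun y => Real.log (h y)) x
        + Real.exp (-Real.log (h x)) * v2 x
        - Real.exp (-Real.log (h x)) * v1 x
            * matD v1 v2 (fun y => Real.log (h y)) x := by
  rw [hs.box_sqrt_eq hs.contDiffAt_v2, hs.matD_matD_v2, hs.pd_potentialVorticity,
    hs.sum_gInv_mul_pd_mul_pd_log, hs.matD_log, hs.momentum1.self_of_nhds,
    hs.momentum2.self_of_nhds, Real.exp_neg, Real.exp_log hs.pos,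
    pd_pd_comm hs.contDiffAt_v1 2 1]
  field_simp [hs.pos.ne']
  ring

end IsShallowWaterSolutionNear

/-- Covariant wave equations for the velocity of the 2D rotating shallow water system:
for `i = 1, 2`,
`□_g v^i = −ε_{ia} e^ρ ∂_a ξ + 2ζ(ε_{ij} B v^j + v^i) − ½ g^{αβ}∂_α v^i ∂_β ρ
  + e^{−ρ} v^i + e^{−ρ} ε_{ij} v^j Bρ`,
with `ρ = ln h`, `η = √h`, `ζ = (∂₁v² − ∂₂v¹)e^{−ρ}`, `ξ = ζ + e^{−ρ}`, `ε₁₂ = 1 = −ε₂₁`.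
The two conjuncts are the cases `i = 1` and `i = 2`. -/
theorem covariant_wave_equation_velocity
    (U : Set (Fin 3 → ℝ)) (hU : IsOpen U)
    (h v1 v2 : (Fin 3 → ℝ) → ℝ)
    (hh : ContDiffOn ℝ 2 h U)
    (hv1 : ContDiffOn ℝ 2 v1 U) (hv2 : ContDiffOn ℝ 2 v2 U)
    (hpos : ∀ x ∈ U, 0 < h x)
    (hmass : ∀ x ∈ U, matD v1 v2 h x = -(h x) * (pd 1 v1 x + pd 2 v2 x))
    (hmom1 : ∀ x ∈ U, matD v1 v2 v1 x = v2 x - pd 1 h x)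
    (hmom2 : ∀ x ∈ U, matD v1 v2 v2 x = -v1 x - pd 2 h x) :
    ∀ x ∈ U,
      (box (fun y => Real.sqrt (h y)) v1 v2 v1 x
        = -(Real.exp (Real.log (h x)))
            * pd 2 (fun y => (pd 1 v2 y - pd 2 v1 y) * Real.exp (-(Real.log (h y)))
                + Real.exp (-(Real.log (h y)))) x
          + 2 * ((pd 1 v2 x - pd 2 v1 x) * Real.exp (-(Real.log (h x))))
              * (matD v1 v2 v2 x + v1 x)
          - (1 / 2) * ∑ α : Fin 3, ∑ β : Fin 3,
              gInv (fun y => Real.sqrt (h y)) v1 v2 x α β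
                * pd α v1 x * pd β (fun y => Real.log (h y)) x
          + Real.exp (-(Real.log (h x))) * v1 x
          + Real.exp (-(Real.log (h x))) * v2 x
              * matD v1 v2 (fun y => Real.log (h y)) x) ∧
      (box (fun y => Real.sqrt (h y)) v1 v2 v2 x
        = Real.exp (Real.log (h x))
            * pd 1 (fun y => (pd 1 v2 y - pd 2 v1 y) * Real.exp (-(Real.log (h y)))
                + Real.exp (-(Real.log (h y)))) x
          + 2 * ((pd 1 v2 x - pd 2 v1 x) * Real.exp (-(Real.log (h x))))
              * (-(matD v1 v2 v1 x) + v2 x)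
          - (1 / 2) * ∑ α : Fin 3, ∑ β : Fin 3,
              gInv (fun y => Real.sqrt (h y)) v1 v2 x α β
                * pd α v2 x * pd β (fun y => Real.log (h y)) x
          + Real.exp (-(Real.log (h x))) * v2 x
          - Real.exp (-(Real.log (h x))) * v1 x
              * matD v1 v2 (fun y => Real.log (h y)) x) := by
  intro x hx
  have hs := IsShallowWaterSolutionNear.of_isOpen hU hh hv1 hv2 hpos hmass hmom1 hmom2 hx
  exact ⟨hs.box_v1, hs.box_v2⟩
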